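/- For a Hermitian n×n matrix A and 1 ≤ k ≤ n, the sum of the k largest eigenvalues of A equals the maximum of ∑_{j=1}^k ⟨A x_j, x_j⟩ over all orthonormal families x₁, …, x_k in ℂⁿ. -/

import Mathlib

/-!
Expand each `xⱼ` in an orthonormal eigenbasis `(vᵢ)` of `A`: then
`∑ⱼ ⟨A xⱼ, xⱼ⟩ = ∑ᵢ λᵢ cᵢ` with `cᵢ = ∑ⱼ |⟨vᵢ, xⱼ⟩|²`. By Bessel's inequality `0 ≤ cᵢ ≤ 1`, and
by Parseval `∑ᵢ cᵢ = k`; such a weighting of the `λᵢ` is at most the sum of the `k` largest ones.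
The eigenvectors belonging to the `k` largest eigenvalues attain the bound.
-/

open Matrix ComplexOrder

noncomputable def matFun {n : ℕ} (f : ℝ → ℝ) (A : Matrix (Fin n) (Fin n) ℂ) :
    Matrix (Fin n) (Fin n) ℂ :=
  if hA : A.IsHermitian then
    (hA.eigenvectorUnitary : Matrix (Fin n) (Fin n) ℂ) *
      Matrix.diagonal (fun i => (f (hA.eigenvalues i) : ℂ)) *
      (hA.eigenvectorUnitary : Matrix (Fin n) (Fin n) ℂ)ᴴ
  else 0

/-- `lam A j` : the `j`-th largest eigenvalue (0-indexed) of a Hermitian matrix `A`. -/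
noncomputable def lam {n : ℕ} (A : Matrix (Fin n) (Fin n) ℂ) (j : ℕ) : ℝ :=
  if hA : A.IsHermitian then
    if h : j < n then (hA.eigenvalues ∘ Tuple.sort hA.eigenvalues) ((⟨j, h⟩ : Fin n).rev)
    else 0
  else 0

/-- Loewner order. -/
def loewnerLE {n : ℕ} (A B : Matrix (Fin n) (Fin n) ℂ) : Prop := (B - A).PosSemidef

/-- `|B| = (B^* B)^{1/2}`. -/
noncomputable def matAbs {n : ℕ} (B : Matrix (Fin n) (Fin n) ℂ) : Matrix (Fin n) (Fin n) ℂ :=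
  ((Matrix.posSemidef_conjTranspose_mul_self B).1.eigenvectorUnitary : Matrix (Fin n) (Fin n) ℂ) *
    Matrix.diagonal (fun i =>
      ((Real.sqrt ((Matrix.posSemidef_conjTranspose_mul_self B).1.eigenvalues i) : ℝ) : ℂ)) *
    (star (Matrix.posSemidef_conjTranspose_mul_self B).1.eigenvectorUnitary : Matrix (Fin n) (Fin n) ℂ)

/-- `|B|^r` via functional calculus. -/
noncomputable def matAbsPow {n : ℕ} (B : Matrix (Fin n) (Fin n) ℂ) (r : ℝ) :
    Matrix (Fin n) (Fin n) ℂ :=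
  matFun (fun t => t ^ r) (matAbs B)

open Finset RCLike
open scoped InnerProductSpace

theorem sum_mul_le_sum_of_sum_eq_card {ι : Type*} [Fintype ι] {g c : ι → ℝ} {S : Finset ι}
    (hS : ∀ t ∈ S, ∀ s ∉ S, g s ≤ g t) (hc0 : ∀ i, 0 ≤ c i) (hc1 : ∀ i, c i ≤ 1)
    (hc : ∑ i, c i = #S) :
    ∑ i, g i * c i ≤ ∑ i ∈ S, g i := by
  classical
  obtain ⟨μ, hμS, hμSc⟩ : ∃ μ, (∀ t ∈ S, μ ≤ g t) ∧ ∀ s ∉ S, g s ≤ μ := by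
    rcases S.eq_empty_or_nonempty with rfl | hne
    · obtain ⟨μ, hμ⟩ := (Set.finite_range g).bddAbove
      exact ⟨μ, by simp, fun s _ => hμ ⟨s, rfl⟩⟩
    · exact ⟨S.inf' hne g, fun t ht => inf'_le g ht,
        fun s hs => le_inf' hne g fun t ht => hS t ht s hs⟩
  set e : ι → ℝ := fun i => if i ∈ S then 1 else 0
  -- `∑ c = ∑ e`, so the threshold `μ` can be subtracted from `g` for free
  have hdiff : ∑ i, g i * c i - ∑ i ∈ S, g i = ∑ i, (g i - μ) * (c i - e i) := by
    have hgS : ∑ i ∈ S, g i = ∑ i, g i * e i := by simp [e, sum_ite_mem]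
    have he : ∑ i, e i = #S := by simp [e]
    simp only [sub_mul, mul_sub, sum_sub_distrib, ← mul_sum, hc, he, hgS]
    ring
  have hterm : ∀ i, (g i - μ) * (c i - e i) ≤ 0 := by
    intro i
    by_cases hi : i ∈ S
    · simp only [e, if_pos hi]
      nlinarith [hμS i hi, hc1 i]
    · simp only [e, if_neg hi, sub_zero]
      nlinarith [hμSc i hi, hc0 i]
  linarith [Fintype.sum_nonpos hterm]

section InnerProductSpace

variable {𝕜 E ι : Type*} [RCLike 𝕜] [NormedAddCommGroup E] [InnerProductSpace 𝕜 E] [Fintype ι]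

theorem OrthonormalBasis.inner_self_apply_eq_sum (b : OrthonormalBasis ι 𝕜 E) {T : E →ₗ[𝕜] E}
    {μ : ι → 𝕜} (hb : ∀ i, T (b i) = μ i • b i) (y : E) :
    ⟪y, T y⟫_𝕜 = ∑ i, μ i * (‖⟪b i, y⟫_𝕜‖ ^ 2 : ℝ) := by
  have hTy : T y = ∑ i, (⟪b i, y⟫_𝕜 * μ i) • b i := by
    conv_lhs => rw [← b.sum_repr' y]
    simp only [map_sum, map_smul, hb, smul_smul]
  rw [hTy, inner_sum]
  refine sum_congr rfl fun i _ => ?_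
  rw [inner_smul_right, ← inner_conj_symm y (b i), mul_right_comm, mul_conj]
  push_cast
  ring

theorem OrthonormalBasis.sum_re_inner_apply_le {κ : Type*} [Fintype κ]
    (b : OrthonormalBasis ι 𝕜 E) {T : E →ₗ[𝕜] E} {μ : ι → ℝ}
    (hb : ∀ i, T (b i) = (μ i : 𝕜) • b i) {S : Finset ι} (hS : ∀ t ∈ S, ∀ s ∉ S, μ s ≤ μ t)
    {x : κ → E} (hx : Orthonormal 𝕜 x) (hκ : Fintype.card κ = #S) :
    ∑ j, re ⟪x j, T (x j)⟫_𝕜 ≤ ∑ i ∈ S, μ i := by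
  set c : ι → ℝ := fun i => ∑ j, ‖⟪b i, x j⟫_𝕜‖ ^ 2
  have hquad : ∑ j, re ⟪x j, T (x j)⟫_𝕜 = ∑ i, μ i * c i := by
    simp only [b.inner_self_apply_eq_sum hb, map_sum, ← ofReal_mul, ofReal_re, c, mul_sum]
    exact sum_comm
  have hc1 : ∀ i, c i ≤ 1 := fun i =>
    calc c i = ∑ j, ‖⟪x j, b i⟫_𝕜‖ ^ 2 := by simp only [c, norm_inner_symm]
      _ ≤ ‖b i‖ ^ 2 := Orthonormal.sum_inner_products_le _ hx
      _ = 1 := by simp [b.orthonormal.1 i]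
  have hc : ∑ i, c i = #S := by
    rw [sum_comm]
    simp [b.sum_sq_norm_inner_right, hx.1, hκ]
  rw [hquad]
  exact sum_mul_le_sum_of_sum_eq_card hS (fun i => by positivity) hc1 hc

end InnerProductSpace

section Matrix

variable {𝕜 m : Type*} [RCLike 𝕜] [Fintype m] [DecidableEq m]

theorem Matrix.star_dotProduct_mulVec_eq_inner_toLpLin (A : Matrix m m 𝕜)
    (y : EuclideanSpace 𝕜 m) :
    star (y : m → 𝕜) ⬝ᵥ (A *ᵥ (y : m → 𝕜)) = ⟪y, toLpLin 2 2 A y⟫_𝕜 := by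
  rw [EuclideanSpace.inner_eq_star_dotProduct, dotProduct_comm]
  rfl

theorem Matrix.IsHermitian.toLpLin_eigenvectorBasis {A : Matrix m m 𝕜} (hA : A.IsHermitian)
    (i : m) :
    toLpLin 2 2 A (hA.eigenvectorBasis i) = (hA.eigenvalues i : 𝕜) • hA.eigenvectorBasis i := by
  rw [toLpLin_apply, hA.mulVec_eigenvectorBasis, RCLike.real_smul_eq_coe_smul (K := 𝕜)]
  rfl

end Matrix

namespace Matrix.IsHermitian

variable {n k : ℕ} {A : Matrix (Fin n) (Fin n) ℂ} (hA : A.IsHermitian)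

/-- `topEigenIdx hA hkn j` is the index of `lam A j`, the `j`-th largest eigenvalue (0-indexed). -/
noncomputable def topEigenIdx (hkn : k ≤ n) : Fin k ↪ Fin n :=
  (Fin.castLEEmb hkn).trans
    (Fin.revPerm.toEmbedding.trans (Tuple.sort hA.eigenvalues).toEmbedding)

theorem sum_range_lam (hkn : k ≤ n) :
    ∑ j ∈ range k, lam A j = ∑ i ∈ univ.map (hA.topEigenIdx hkn), hA.eigenvalues i := by
  rw [sum_map, ← Fin.sum_univ_eq_sum_range]
  refine sum_congr rfl fun j _ => ?_
  rw [lam, dif_pos hA, dif_pos (j.2.trans_le hkn)]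
  rfl

theorem eigenvalues_le_of_mem_map_topEigenIdx (hkn : k ≤ n) {s t : Fin n}
    (ht : t ∈ univ.map (hA.topEigenIdx hkn)) (hs : s ∉ univ.map (hA.topEigenIdx hkn)) :
    hA.eigenvalues s ≤ hA.eigenvalues t := by
  set σ := Tuple.sort hA.eigenvalues
  obtain ⟨j, -, rfl⟩ := mem_map.1 ht
  obtain ⟨q, rfl⟩ := σ.surjective s
  have hq : (q : ℕ) < n - k := by
    by_contra! hq
    refine hs (mem_map.2 ⟨⟨n - 1 - q, by omega⟩, mem_univ _, ?_⟩)
    simp only [topEigenIdx, Function.Embedding.trans_apply, Fin.castLEEmb_apply]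
    refine congrArg σ (Fin.ext ?_)
    simp only [Equiv.coe_toEmbedding, Fin.revPerm_apply, Fin.val_rev, Fin.val_castLE]
    omega
  exact Tuple.monotone_sort hA.eigenvalues (show q ≤ (Fin.castLE hkn j).rev by
    rw [Fin.le_def, Fin.val_rev, Fin.val_castLE]; omega)

end Matrix.IsHermitian

theorem ky_fan_maximum_principle_general {n : ℕ} (A : Matrix (Fin n) (Fin n) ℂ)
    (hA : A.IsHermitian) (k : ℕ) (hkn : k ≤ n) :
    IsGreatest
      {s : ℝ | ∃ x : Fin k → EuclideanSpace ℂ (Fin n), Orthonormal ℂ x ∧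
        s = ∑ j, (star (x j : Fin n → ℂ) ⬝ᵥ (A *ᵥ (x j : Fin n → ℂ))).re}
      (∑ j ∈ Finset.range k, lam A j) := by
  rw [hA.sum_range_lam hkn]
  refine ⟨⟨_, hA.eigenvectorBasis.orthonormal.comp _ (hA.topEigenIdx hkn).injective, ?_⟩, ?_⟩
  · simp [sum_map, hA.eigenvalues_eq]
  · rintro s ⟨x, hx, rfl⟩
    simp only [star_dotProduct_mulVec_eq_inner_toLpLin, ← re_to_complex]
    exact hA.eigenvectorBasis.sum_re_inner_apply_le hA.toLpLin_eigenvectorBasis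
      (fun t ht s hs => hA.eigenvalues_le_of_mem_map_topEigenIdx hkn ht hs) hx (by simp)

/-- **Ky Fan's maximum principle.** For a Hermitian `A` and `1 ≤ k ≤ n`, the sum of
the `k` largest eigenvalues of `A` is the maximum of `∑_{j=1}^k ⟨A xⱼ, xⱼ⟩` over all
orthonormal families `x₁, …, x_k` in `ℂⁿ`. -/
theorem ky_fan_maximum_principle {n : ℕ} (A : Matrix (Fin n) (Fin n) ℂ)
    (hA : A.IsHermitian) (k : ℕ) (hk1 : 1 ≤ k) (hkn : k ≤ n) :
    IsGreatest
      {s : ℝ | ∃ x : Fin k → EuclideanSpace ℂ (Fin n), Orthonormal ℂ x ∧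
        s = ∑ j, (star (x j : Fin n → ℂ) ⬝ᵥ (A *ᵥ (x j : Fin n → ℂ))).re}
      (∑ j ∈ Finset.range k, lam A j) :=
  ky_fan_maximum_principle_general A hA k hkn
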